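/- Let H be a numerical semigroup containing q with smallest nonzero element λ₁. Then 1 + #(H \ (qH* + H)) = qλ₁ + 1; that is, when q ∈ H the Geil–Matsumoto bound coincides with the Lewittes bound qλ₁ + 1. -/

import Mathlib

/-!
Since `q ∈ H`, every `q * l` with `l ∈ H*` is `q * λ₁` plus a multiple of `q`, so
`qH* + H = q * λ₁ + H`. For any `e ∈ H`, the set `H \ (e + H)` has exactly `e` elements:
below a bound `N` past the conductor, `H ∩ [0, N + e)` has `e` more elements than its
translate `e + (H ∩ [0, N))`, and above it nothing is left.
-/

open Finset

/-- A numerical semigroup: a subset of ℕ containing 0, closed under addition,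
with finite complement in ℕ. -/
def IsNumericalSemigroup (H : Set ℕ) : Prop :=
  0 ∈ H ∧ (∀ a ∈ H, ∀ b ∈ H, a + b ∈ H) ∧ (Hᶜ : Set ℕ).Finite

lemma card_filter_range_add_of_forall_le_mem {S : Set ℕ} [DecidablePred (· ∈ S)] {N : ℕ}
    (hN : ∀ n, N ≤ n → n ∈ S) (e : ℕ) :
    #{x ∈ range (N + e) | x ∈ S} = #{x ∈ range N | x ∈ S} + e := by
  simp only [← Nat.count_eq_card_filter_range, Nat.count_add,
    Nat.count_of_forall fun k _ => hN (N + k) (Nat.le_add_right N k)]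

theorem ncard_diff_image_add {S : Set ℕ} {e : ℕ} (hfin : Sᶜ.Finite)
    (hadd : ∀ m ∈ S, e + m ∈ S) : (S \ (e + ·) '' S).ncard = e := by
  classical
  obtain ⟨M, hM⟩ := hfin.bddAbove
  have hN : ∀ n, M + 1 ≤ n → n ∈ S := fun n hn => by_contra fun h => absurd (hM h) (by omega)
  set A := {x ∈ range (M + 1 + e) | x ∈ S}
  set B := {x ∈ range (M + 1) | x ∈ S}.image (e + ·)
  have hBA : B ⊆ A := by
    simp only [B, A, subset_iff, mem_image, mem_filter, mem_range]
    rintro _ ⟨m, ⟨hm, hmS⟩, rfl⟩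
    exact ⟨by omega, hadd m hmS⟩
  have hdiff : S \ (e + ·) '' S = ↑(A \ B) := by
    ext x
    simp only [A, B, Set.mem_sdiff, Set.mem_image, coe_sdiff, mem_coe, mem_filter, mem_range,
      mem_image]
    constructor
    · rintro ⟨hxS, hx⟩
      refine ⟨⟨?_, hxS⟩, fun ⟨m, ⟨_, hmS⟩, hm⟩ => hx ⟨m, hmS, hm⟩⟩
      by_contra hlt
      exact hx ⟨x - e, hN _ (by omega), by omega⟩
    · rintro ⟨⟨hx, hxS⟩, hxB⟩
      exact ⟨hxS, fun ⟨m, hmS, hm⟩ => hxB ⟨m, ⟨by omega, hmS⟩, hm⟩⟩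
  rw [hdiff, Set.ncard_coe_finset, card_sdiff_of_subset hBA,
    card_image_of_injective _ (add_right_injective e), card_filter_range_add_of_forall_le_mem hN]
  omega

namespace IsNumericalSemigroup

variable {H : Set ℕ}

lemma mul_mem (hH : IsNumericalSemigroup H) {q : ℕ} (hq : q ∈ H) (k : ℕ) : q * k ∈ H := by
  induction k with
  | zero => simpa using hH.1
  | succ k ih => exact hH.2.1 _ ih _ hq

lemma mul_nonzero_add_eq_image (hH : IsNumericalSemigroup H) {q lam1 : ℕ} (hq : q ∈ H)
    (hlam1 : IsLeast {h | h ∈ H ∧ h ≠ 0} lam1) :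
    {x | ∃ l ∈ H, l ≠ 0 ∧ ∃ m ∈ H, x = q * l + m} = (q * lam1 + ·) '' H := by
  ext x
  constructor
  · rintro ⟨l, hl, hl0, m, hm, rfl⟩
    have hle : lam1 ≤ l := hlam1.2 ⟨hl, hl0⟩
    refine ⟨q * (l - lam1) + m, hH.2.1 _ (hH.mul_mem hq _) _ hm, ?_⟩
    show q * lam1 + (q * (l - lam1) + m) = _
    rw [← add_assoc, ← mul_add, Nat.add_sub_cancel' hle]
  · rintro ⟨m, hm, rfl⟩
    exact ⟨lam1, hlam1.1.1, hlam1.1.2, m, hm, rfl⟩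

end IsNumericalSemigroup

theorem stmt_19_general (H : Set ℕ) (hH : IsNumericalSemigroup H)
    (q : ℕ) (hqH : q ∈ H)
    (lam1 : ℕ) (hlam1 : IsLeast {h | h ∈ H ∧ h ≠ 0} lam1) :
    1 + (H \ {x | ∃ l ∈ H, l ≠ 0 ∧ ∃ m ∈ H, x = q * l + m}).ncard = q * lam1 + 1 := by
  rw [hH.mul_nonzero_add_eq_image hqH hlam1,
    ncard_diff_image_add hH.2.2 fun m hm => hH.2.1 _ (hH.mul_mem hqH lam1) _ hm]
  omega

/-- If q ∈ H and λ₁ is the smallest nonzero element of H, then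
1 + #(H \ (qH* + H)) = qλ₁ + 1: the Geil–Matsumoto bound coincides with the
Lewittes bound qλ₁ + 1 when q ∈ H. -/
theorem stmt_19 (H : Set ℕ) (hH : IsNumericalSemigroup H)
    (q : ℕ) (hq : 0 < q) (hqH : q ∈ H)
    (lam1 : ℕ) (hlam1 : IsLeast {h | h ∈ H ∧ h ≠ 0} lam1) :
    1 + (H \ {x | ∃ l ∈ H, l ≠ 0 ∧ ∃ m ∈ H, x = q * l + m}).ncard = q * lam1 + 1 :=
  stmt_19_general H hH q hqH lam1 hlam1
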